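/- arXiv:2504.09188 — 3 statements merged into one kernel-verified Lean document; each statement's English description precedes it below -/
import Mathlib

section
/- Let n ∈ ℕ, let q : ℝ → (Fin n → ℝ) be twice differentiable, let v ∈ (Fin n → ℝ) be a constant reference, let M : ℝ → Matrix (Fin n) (Fin n) ℝ and C : ℝ → Matrix (Fin n) (Fin n) ℝ be matrix-valued functions of time (the mass and Coriolis matrices evaluated along the trajectory), with each M(t) symmetric, and let K_P, K_D be constant n×n real matrices with K_P symmetric. Assume: (i) M is differentiable and its derivative satisfies M′(t) = C(t) + C(t)ᵀ for all t (skew-symmetry of Ṁ − 2C); (ii) the closed-loop Euler–Lagrange dynamics under PD control with gravity compensation hold: M(t) · q″(t) + C(t) · q′(t) = −K_P · (q(t) − v) − K_D · q′(t) for all t. Then the total energy V(t) = ½ q′(t)ᵀ M(t) q′(t) + ½ (q(t) − v)ᵀ K_P (q(t) − v) is differentiable with V′(t) = −q′(t)ᵀ K_D q′(t) for all t. (Equation (6) of the paper.) -/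
/-! Differentiating `V` and using the symmetry of `M` and `K_P` gives
`V̇ = ½ q̇ᵀ Ṁ q̇ + q̇ᵀ M q̈ + q̇ᵀ K_P (q − v)`. Since `Ṁ = C + Cᵀ`, the first term is `q̇ᵀ C q̇`,
so `V̇ = q̇ᵀ (M q̈ + C q̇ + K_P (q − v))`, which the closed-loop dynamics turn into `−q̇ᵀ K_D q̇`. -/

open Matrix

section

variable {𝕜 : Type*} [NontriviallyNormedField 𝕜] {m n : Type*} [Fintype n]
  {t : 𝕜}

theorem HasDerivAt.dotProduct {a b : 𝕜 → n → 𝕜} {a' b' : n → 𝕜}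
    (ha : HasDerivAt a a' t) (hb : HasDerivAt b b' t) :
    HasDerivAt (fun s => a s ⬝ᵥ b s) (a' ⬝ᵥ b t + a t ⬝ᵥ b') t := by
  rw [_root_.dotProduct, _root_.dotProduct, ← Finset.sum_add_distrib]
  exact HasDerivAt.fun_sum fun i _ => (hasDerivAt_pi.1 ha i).mul (hasDerivAt_pi.1 hb i)

theorem HasDerivAt.mulVec {A : 𝕜 → Matrix m n 𝕜} {A' : Matrix m n 𝕜} {b : 𝕜 → n → 𝕜}
    {b' : n → 𝕜} (hA : ∀ i j, HasDerivAt (fun s => A s i j) (A' i j) t)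
    (hb : HasDerivAt b b' t) :
    HasDerivAt (fun s => A s *ᵥ b s) (A' *ᵥ b t + A t *ᵥ b') t :=
  hasDerivAt_pi.2 fun i => (hasDerivAt_pi.2 (hA i)).dotProduct hb

theorem HasDerivAt.dotProduct_mulVec [Fintype m] {a : 𝕜 → m → 𝕜} {A : 𝕜 → Matrix m n 𝕜}
    {b : 𝕜 → n → 𝕜} {a' : m → 𝕜} {A' : Matrix m n 𝕜} {b' : n → 𝕜}
    (ha : HasDerivAt a a' t) (hA : ∀ i j, HasDerivAt (fun s => A s i j) (A' i j) t)
    (hb : HasDerivAt b b' t) :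
    HasDerivAt (fun s => a s ⬝ᵥ A s *ᵥ b s)
      (a' ⬝ᵥ A t *ᵥ b t + a t ⬝ᵥ A' *ᵥ b t + a t ⬝ᵥ A t *ᵥ b') t := by
  simpa only [dotProduct_add, add_assoc] using ha.dotProduct (hb.mulVec hA)

theorem HasDerivAt.dotProduct_mulVec_self_of_isSymm {x : 𝕜 → n → 𝕜} {A : 𝕜 → Matrix n n 𝕜}
    {x' : n → 𝕜} {A' : Matrix n n 𝕜} (hx : HasDerivAt x x' t)
    (hA : ∀ i j, HasDerivAt (fun s => A s i j) (A' i j) t) (hsymm : (A t).IsSymm) :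
    HasDerivAt (fun s => x s ⬝ᵥ A s *ᵥ x s)
      (x t ⬝ᵥ A' *ᵥ x t + 2 * (x t ⬝ᵥ A t *ᵥ x')) t := by
  convert hx.dotProduct_mulVec hA hx using 1
  rw [← dotProduct_transpose_mulVec (A t) (x t) x', hsymm.eq]
  ring

end

/-- Equation (6): along the prestabilized closed-loop Euler–Lagrange dynamics
`M q̈ + C q̇ = −K_P (q − v) − K_D q̇`, with `M` symmetric, `Ṁ = C + Cᵀ`, and
`K_P` symmetric, the total energy
`V(t) = ½ q̇ᵀ M q̇ + ½ (q − v)ᵀ K_P (q − v)` satisfies `V̇ = −q̇ᵀ K_D q̇`. -/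
theorem energy_derivative {n : ℕ}
    (q q' q'' : ℝ → (Fin n → ℝ)) (v : Fin n → ℝ)
    (M M' C : ℝ → Matrix (Fin n) (Fin n) ℝ)
    (K_P K_D : Matrix (Fin n) (Fin n) ℝ)
    (hq : ∀ t, HasDerivAt q (q' t) t)
    (hq' : ∀ t, HasDerivAt q' (q'' t) t)
    (hMsymm : ∀ t, (M t).IsSymm)
    (hKPsymm : K_P.IsSymm)
    (hM : ∀ t, ∀ i j, HasDerivAt (fun s => M s i j) (M' t i j) t)
    (hMdot : ∀ t, M' t = C t + (C t)ᵀ)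
    (hdyn : ∀ t, (M t) *ᵥ (q'' t) + (C t) *ᵥ (q' t) =
      -(K_P *ᵥ (q t - v)) - K_D *ᵥ (q' t))
    (V : ℝ → ℝ)
    (hV : ∀ t, V t = (1/2) * (q' t ⬝ᵥ (M t) *ᵥ (q' t))
      + (1/2) * ((q t - v) ⬝ᵥ K_P *ᵥ (q t - v))) :
    ∀ t, HasDerivAt V (-(q' t ⬝ᵥ K_D *ᵥ (q' t))) t := by
  intro t
  have hkinetic := (hq' t).dotProduct_mulVec_self_of_isSymm (hM t) (hMsymm t)
  have hpotential := ((hq t).sub_const v).dotProduct_mulVec_self_of_isSymm (A' := 0)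
    (fun i j => hasDerivAt_const t (K_P i j)) hKPsymm
  have hcoriolis : q' t ⬝ᵥ M' t *ᵥ q' t = 2 * (q' t ⬝ᵥ C t *ᵥ q' t) := by
    rw [hMdot, add_mulVec, dotProduct_add, dotProduct_transpose_mulVec]
    ring
  have hpower : q' t ⬝ᵥ M t *ᵥ q'' t + q' t ⬝ᵥ C t *ᵥ q' t
      = -(q' t ⬝ᵥ K_P *ᵥ (q t - v)) - q' t ⬝ᵥ K_D *ᵥ q' t := by
    rw [← dotProduct_add, hdyn, dotProduct_sub, dotProduct_neg]
  have hKP : (q t - v) ⬝ᵥ K_P *ᵥ q' t = q' t ⬝ᵥ K_P *ᵥ (q t - v) := by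
    rw [← dotProduct_transpose_mulVec, hKPsymm.eq]
  rw [funext hV]
  refine ((hkinetic.const_mul (1 / 2)).add (hpotential.const_mul (1 / 2))).congr_deriv ?_
  rw [hcoriolis, zero_mulVec, dotProduct_zero, hKP]
  linarith
end

section
/- Let φ be a semiflow on X. Let c_h, c_s, c_E : X → ℝ be constraint functions and Δ_h, Δ_s, Δ_E : X → ℝ be functions such that for each pair (Δ, c) ∈ {(Δ_h, c_h), (Δ_s, c_s), (Δ_E, c_E)} and every x ∈ X: (a) Δ(x) > 0 implies c(φ τ x) < 0 for all τ ≥ 0; (b) Δ(x) ≥ 0 implies c(φ τ x) ≤ 0 for all τ ≥ 0; (c) Δ(φ τ x) ≥ Δ(x) for all τ ≥ 0. Define the compliant dynamic safety margin Δ(x) = min(Δ_h(x), max(Δ_s(x), Δ_E(x))) and the compliant constraint c(x) = max(c_h(x), min(c_s(x), c_E(x))). Then for every x ∈ X: (i) Δ(x) > 0 implies c(φ τ x) < 0 for all τ ≥ 0; (ii) Δ(x) ≥ 0 implies c(φ τ x) ≤ 0 for all τ ≥ 0; (iii) Δ(φ τ x) ≥ Δ(x) for all τ ≥ 0, so in particular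 Δ(x) = 0 implies Δ(φ τ x) ≥ 0 for all τ ≥ 0. (Theorem 1 of the paper: Δ = min(Δ_h, max(Δ_s, Δ_E)) is a dynamic safety margin for the compliant constraint that enforces the hard constraint c_h ≤ 0 at all times AND, at each time, the soft constraint c_s ≤ 0 OR the energy constraint c_E ≤ 0.) -/
/-- Theorem 1: `Δ = min(Δ_h, max(Δ_s, Δ_E))` is a dynamic safety margin for the
compliant constraint `c = max(c_h, min(c_s, c_E))`, which enforces the hard
constraint at all times AND, at each time, the soft constraint OR the energy
constraint. -/
theorem compliant_dsm {X : Type*} (φ : ℝ → X → X)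
    (hφ0 : ∀ x, φ 0 x = x)
    (hφadd : ∀ s t : ℝ, 0 ≤ s → 0 ≤ t → ∀ x, φ s (φ t x) = φ (s + t) x)
    (ch cs cE Δh Δs ΔE : X → ℝ)
    (hhpos : ∀ x, Δh x > 0 → ∀ τ : ℝ, 0 ≤ τ → ch (φ τ x) < 0)
    (hhnonneg : ∀ x, Δh x ≥ 0 → ∀ τ : ℝ, 0 ≤ τ → ch (φ τ x) ≤ 0)
    (hhmono : ∀ x, ∀ τ : ℝ, 0 ≤ τ → Δh (φ τ x) ≥ Δh x)
    (hspos : ∀ x, Δs x > 0 → ∀ τ : ℝ, 0 ≤ τ → cs (φ τ x) < 0)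
    (hsnonneg : ∀ x, Δs x ≥ 0 → ∀ τ : ℝ, 0 ≤ τ → cs (φ τ x) ≤ 0)
    (hsmono : ∀ x, ∀ τ : ℝ, 0 ≤ τ → Δs (φ τ x) ≥ Δs x)
    (hEpos : ∀ x, ΔE x > 0 → ∀ τ : ℝ, 0 ≤ τ → cE (φ τ x) < 0)
    (hEnonneg : ∀ x, ΔE x ≥ 0 → ∀ τ : ℝ, 0 ≤ τ → cE (φ τ x) ≤ 0)
    (hEmono : ∀ x, ∀ τ : ℝ, 0 ≤ τ → ΔE (φ τ x) ≥ ΔE x)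
    (Δ c : X → ℝ)
    (hΔ : ∀ x, Δ x = min (Δh x) (max (Δs x) (ΔE x)))
    (hc : ∀ x, c x = max (ch x) (min (cs x) (cE x))) :
    ∀ x : X,
      (Δ x > 0 → ∀ τ : ℝ, 0 ≤ τ → c (φ τ x) < 0) ∧
      (Δ x ≥ 0 → ∀ τ : ℝ, 0 ≤ τ → c (φ τ x) ≤ 0) ∧
      (∀ τ : ℝ, 0 ≤ τ → Δ (φ τ x) ≥ Δ x) ∧
      (Δ x = 0 → ∀ τ : ℝ, 0 ≤ τ → Δ (φ τ x) ≥ 0) := by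
  intro x
  have key : ∀ τ : ℝ, 0 ≤ τ → Δ (φ τ x) ≥ Δ x := by
    intro τ hτ
    rw [hΔ, hΔ]
    exact le_min (le_trans (min_le_left _ _) (hhmono x τ hτ))
      (le_trans (min_le_right _ _) (max_le_max (hsmono x τ hτ) (hEmono x τ hτ)))
  refine ⟨?_, ?_, key, ?_⟩
  · intro h τ hτ
    rw [hΔ] at h
    have h1 : 0 < Δh x := lt_of_lt_of_le h (min_le_left _ _)
    have h2 : 0 < max (Δs x) (ΔE x) := lt_of_lt_of_le h (min_le_right _ _)
    rw [hc, max_lt_iff]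
    refine ⟨hhpos x h1 τ hτ, ?_⟩
    rcases lt_max_iff.mp h2 with hs | hE
    · exact min_lt_iff.mpr (Or.inl (hspos x hs τ hτ))
    · exact min_lt_iff.mpr (Or.inr (hEpos x hE τ hτ))
  · intro h τ hτ
    rw [hΔ] at h
    have h1 : (0:ℝ) ≤ Δh x := le_trans h (min_le_left _ _)
    have h2 : (0:ℝ) ≤ max (Δs x) (ΔE x) := le_trans h (min_le_right _ _)
    rw [hc, max_le_iff]
    refine ⟨hhnonneg x h1 τ hτ, ?_⟩
    rcases le_max_iff.mp h2 with hs | hE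
    · exact min_le_of_left_le (hsnonneg x hs τ hτ)
    · exact min_le_of_right_le (hEnonneg x hE τ hτ)
  · intro h τ hτ
    have := key τ hτ
    linarith
end

section
/- Let E be a real inner product space, r, v ∈ E, η > 0 and δ_s > 0. Let g ∈ E with g ≠ 0 (the gradient of the soft constraint s at v), let ρ_att = (r − v)/max(‖r − v‖, η) be the attraction field, and let the soft repulsion field at v be ρ_s = max(σ/δ_s, 0) · (−g/‖g‖), where σ ∈ ℝ is the value s(v). If σ ≥ δ_s, then ⟨g, ρ_att + ρ_s⟩ ≤ 0; i.e., at penetration depth δ_s or beyond, the combined navigation field does not increase the constraint value s, which prevents the applied reference from penetrating any further than δ_s. (Claimed property of the soft navigation field in Section IV.B.) -/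
open scoped RealInnerProductSpace

/-- At penetration depth `δ_s` or beyond, the combined navigation field
`ρ_att + ρ_s` does not increase the soft constraint value: its inner product
with the constraint gradient `g` is nonpositive. -/
theorem navigation_field_limits_penetration {E : Type*}
    [NormedAddCommGroup E] [InnerProductSpace ℝ E]
    (r v : E) (η δs : ℝ) (hη : 0 < η) (hδs : 0 < δs)
    (g : E) (hg : g ≠ 0) (σ : ℝ)
    (ρatt ρs : E)
    (hρatt : ρatt = (max ‖r - v‖ η)⁻¹ • (r - v))
    (hρs : ρs = max (σ / δs) 0 • (-(‖g‖⁻¹ • g)))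
    (hσ : σ ≥ δs) :
    ⟪g, ρatt + ρs⟫ ≤ 0 := by
  have hgn : (0:ℝ) < ‖g‖ := norm_pos_iff.mpr hg
  have hmax : (0:ℝ) < max ‖r - v‖ η := lt_max_of_lt_right hη
  -- bound on attraction term
  have h1 : ⟪g, ρatt⟫ ≤ ‖g‖ := by
    calc ⟪g, ρatt⟫ ≤ ‖g‖ * ‖ρatt‖ := real_inner_le_norm g ρatt
    _ ≤ ‖g‖ * 1 := by
        apply mul_le_mul_of_nonneg_left _ (le_of_lt hgn)
        rw [hρatt, norm_smul, norm_inv, Real.norm_eq_abs, abs_of_pos hmax]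
        rw [inv_mul_eq_div, div_le_one hmax]
        exact le_max_left _ _
    _ = ‖g‖ := mul_one _
  -- repulsion term
  have hc : (1:ℝ) ≤ max (σ / δs) 0 := by
    refine le_max_of_le_left ?_
    rw [le_div_iff₀ hδs]; linarith
  have h2 : ⟪g, ρs⟫ = -(max (σ / δs) 0 * ‖g‖) := by
    rw [hρs, real_inner_smul_right, inner_neg_right, real_inner_smul_right,
      real_inner_self_eq_norm_sq]
    field_simp
  have h2' : ⟪g, ρs⟫ ≤ -‖g‖ := by
    rw [h2]
    nlinarith
  rw [inner_add_right]
  linarith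
end
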